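/- arXiv:1902.10017 — 5 statements merged into one kernel-verified Lean document; each statement's English description precedes it below -/
import Mathlib

section
/- Fix constants B > 0 and y > 0. The function h(t) = t * (2^(y/(B t)) - 1) is strictly decreasing on t > 0. -/
/-- For B > 0 and y > 0, the function h(t) = t * (2^(y/(B t)) - 1) is strictly
decreasing on t > 0. -/
theorem transmission_energy_strictAntiOn (B y : ℝ) (hB : 0 < B) (hy : 0 < y) :
    StrictAntiOn (fun t : ℝ => t * ((2 : ℝ) ^ (y / (B * t)) - 1)) (Set.Ioi 0) := by
  set c : ℝ := y / B with hc
  have hc0 : 0 < c := div_pos hy hB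
  have hderiv : ∀ t : ℝ, 0 < t → HasDerivAt
      (fun t : ℝ => t * ((2 : ℝ) ^ (y / (B * t)) - 1))
      ((2 : ℝ) ^ (c / t) - 1 + t * ((2 : ℝ) ^ (c / t) * Real.log 2 * (c * (-(t ^ 2)⁻¹)))) t := by
    intro t ht
    have ht' : t ≠ 0 := ne_of_gt ht
    have hfun : (fun t : ℝ => y / (B * t)) = fun t : ℝ => c * t⁻¹ := by
      funext s
      rw [hc]
      by_cases hs : s = 0
      · simp [hs]
      · field_simp
    have h1 : HasDerivAt (fun t : ℝ => y / (B * t)) (c * (-(t ^ 2)⁻¹)) t := by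
      rw [hfun]
      exact (hasDerivAt_inv ht').const_mul c
    have h2 : HasDerivAt (fun t : ℝ => (2 : ℝ) ^ (y / (B * t)))
        ((2 : ℝ) ^ (y / (B * t)) * Real.log 2 * (c * (-(t ^ 2)⁻¹))) t :=
      ((Real.hasStrictDerivAt_const_rpow (by norm_num : (0:ℝ) < 2)
        (y / (B * t))).hasDerivAt.comp t h1)
    have hyb : y / (B * t) = c / t := by field_simp [hc]; rw [hc]; field_simp
    rw [hyb] at h2
    have h3 := (hasDerivAt_id t).mul (h2.sub_const 1)
    simp only [id, hyb, one_mul] at h3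
    exact h3
  have hcont : ∀ t : ℝ, 0 < t → ((2 : ℝ) ^ (c / t) - 1 + t * ((2 : ℝ) ^ (c / t) * Real.log 2 * (c * (-(t ^ 2)⁻¹)))) < 0 := by
    intro t ht
    set u : ℝ := Real.log 2 * (c / t) with hu
    have hu0 : 0 < u := by
      have : 0 < Real.log 2 := Real.log_pos (by norm_num)
      exact mul_pos this (div_pos hc0 ht)
    have h2e : (2 : ℝ) ^ (c / t) = Real.exp u := by
      rw [Real.rpow_def_of_pos (by norm_num : (0:ℝ) < 2)]
    have key : Real.exp (-u) > 1 - u := by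
      have := Real.add_one_lt_exp (x := -u) (by linarith [hu0])
      linarith
    have hepos : 0 < Real.exp u := Real.exp_pos u
    have hmul : Real.exp u * Real.exp (-u) = 1 := by
      rw [← Real.exp_add]; simp
    have key2 : Real.exp u * (1 - u) < 1 := by
      nlinarith [mul_lt_mul_of_pos_left key hepos]
    have heq : (2 : ℝ) ^ (c / t) - 1 + t * ((2 : ℝ) ^ (c / t) * Real.log 2 * (c * (-(t ^ 2)⁻¹)))
        = Real.exp u * (1 - u) - 1 := by
      rw [h2e, hu]
      field_simp
      ring
    rw [heq]; linarith
  have hconv : Convex ℝ (Set.Ioi (0:ℝ)) := convex_Ioi 0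
  apply strictAntiOn_of_deriv_neg hconv
  · exact fun t ht => ((hderiv t ht).continuousAt).continuousWithinAt
  · intro t ht
    rw [interior_Ioi] at ht
    rw [(hderiv t ht).deriv]
    exact hcont t ht
end

section
/- Let B > 0, define f(x) = 2^(x/B) - 1 and f̃(z) = (B/ln 2) * (W₀(z/e - 1/e) + 1), where W₀ is the principal branch of the Lambert W function. Then for every z ≥ 0, the point x = f̃(z) satisfies f(x) - x * f'(x) = -z; that is, f̃(z) solves the equation f(x) - x f'(x) = -z for x ≥ 0. -/
/-- Let B > 0, f(x) = 2^(x/B) - 1 and f̃(z) = (B/ln 2)*(W₀(z/e - 1/e) + 1),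
where W₀ is the principal branch of the Lambert W function (characterized by
W₀(y) * exp(W₀(y)) = y and W₀(y) ≥ -1 for y ≥ -1/e).  Then for every z ≥ 0,
the point x = f̃(z) satisfies f(x) - x * f'(x) = -z. -/
theorem lambertW_solves_stationarity (B : ℝ) (hB : 0 < B)
    (W₀ : ℝ → ℝ)
    (hW : ∀ y : ℝ, -(1 / Real.exp 1) ≤ y → W₀ y * Real.exp (W₀ y) = y ∧ -1 ≤ W₀ y)
    (f ftilde : ℝ → ℝ) (hf : ∀ x : ℝ, f x = (2 : ℝ) ^ (x / B) - 1)
    (hft : ∀ z : ℝ, ftilde z = (B / Real.log 2) * (W₀ (z / Real.exp 1 - 1 / Real.exp 1) + 1)) :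
    ∀ z : ℝ, 0 ≤ z → f (ftilde z) - ftilde z * deriv f (ftilde z) = -z := by
  intro z hz
  have hlog2 : (0:ℝ) < Real.log 2 := Real.log_pos (by norm_num)
  have hfe : f = fun x => Real.exp (Real.log 2 * (x / B)) - 1 := by
    funext x
    rw [hf, Real.rpow_def_of_pos (by norm_num : (0:ℝ) < 2)]
  have hderiv : ∀ x : ℝ, deriv f x = Real.log 2 / B * Real.exp (Real.log 2 * (x / B)) := by
    intro x
    have h1 : HasDerivAt (fun x : ℝ => Real.log 2 * (x / B)) (Real.log 2 / B) x := by
      simpa [mul_div_assoc, div_eq_mul_inv] using ((hasDerivAt_id x).div_const B).const_mul (Real.log 2)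
    have h2 : HasDerivAt (fun x => Real.exp (Real.log 2 * (x / B)) - 1)
        (Real.exp (Real.log 2 * (x / B)) * (Real.log 2 / B)) x := h1.exp.sub_const 1
    rw [hfe, h2.deriv]; ring
  set y := z / Real.exp 1 - 1 / Real.exp 1 with hy_def
  have hy : -(1 / Real.exp 1) ≤ y := by
    have h0 : 0 ≤ z / Real.exp 1 := div_nonneg hz (Real.exp_pos 1).le
    rw [hy_def]; linarith
  obtain ⟨hWe, hW1⟩ := hW y hy
  set w := W₀ y with hw_def
  have hx : ftilde z = B / Real.log 2 * (w + 1) := hft z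
  have hxB : Real.log 2 * (ftilde z / B) = w + 1 := by
    rw [hx]; field_simp
  have hyz : y * Real.exp 1 = z - 1 := by
    rw [hy_def]; field_simp
  have hfv : f (ftilde z) = Real.exp (w + 1) - 1 := by
    rw [hfe]; simp only [← hxB]
  have hdv : deriv f (ftilde z) = Real.log 2 / B * Real.exp (w + 1) := by
    rw [hderiv, hxB]
  rw [hfv, hdv, hx]
  have hE : Real.exp (w + 1) = Real.exp w * Real.exp 1 := Real.exp_add w 1
  have hkey : w * Real.exp w * Real.exp 1 = z - 1 := by rw [hWe, hyz]
  have : B / Real.log 2 * (w + 1) * (Real.log 2 / B * Real.exp (w + 1))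
      = (w + 1) * Real.exp (w + 1) := by
    field_simp
  rw [this, hE]
  nlinarith [hkey]
end

section
/- Let B > 0, h̄ > 0, λ > 0, D > 0, T > 0, and define f(x) = 2^(x/B) - 1 and f̃(z) = (B/ln 2)(W₀(z/e - 1/e) + 1). The function G(t) = D*t + (λ/h̄) * f(T/t) * t over t > 0 attains its global minimum at t* = T / f̃(D*h̄/λ). -/
/-- Let B > 0, h̄ > 0, λ > 0, D > 0, T > 0, f(x) = 2^(x/B) - 1 and
f̃(z) = (B/ln 2)(W₀(z/e - 1/e) + 1), where W₀ is the principal branch of the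
Lambert W function.  The function G(t) = D*t + (λ/h̄) * f(T/t) * t over t > 0
attains its global minimum at t* = T / f̃(D*h̄/λ). -/
theorem lagrangian_offload_term_min (B hbar lam D T : ℝ)
    (hB : 0 < B) (hh : 0 < hbar) (hlam : 0 < lam) (hD : 0 < D) (hT : 0 < T)
    (W₀ : ℝ → ℝ)
    (hW : ∀ y : ℝ, -(1 / Real.exp 1) ≤ y → W₀ y * Real.exp (W₀ y) = y ∧ -1 ≤ W₀ y)
    (f ftilde : ℝ → ℝ) (hf : ∀ x : ℝ, f x = (2 : ℝ) ^ (x / B) - 1)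
    (hft : ∀ z : ℝ, ftilde z = (B / Real.log 2) * (W₀ (z / Real.exp 1 - 1 / Real.exp 1) + 1))
    (G : ℝ → ℝ) (hG : ∀ t : ℝ, G t = D * t + (lam / hbar) * f (T / t) * t)
    (tstar : ℝ) (htstar : tstar = T / ftilde (D * hbar / lam)) :
    ∀ t : ℝ, 0 < t → G tstar ≤ G t := by
  intro t ht
  have hlog2 : 0 < Real.log 2 := Real.log_pos (by norm_num)
  set a : ℝ := Real.log 2 / B with ha_def
  have ha : 0 < a := div_pos hlog2 hB
  set c : ℝ := lam / hbar with hc_def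
  have hc : 0 < c := div_pos hlam hh
  set z : ℝ := D * hbar / lam with hz_def
  have hz : 0 < z := by positivity
  have hcz : c * z = D := by
    rw [hc_def, hz_def]; field_simp
  have hexp1 : (0:ℝ) < Real.exp 1 := Real.exp_pos 1
  have hWarg : -(1 / Real.exp 1) ≤ (z - 1) / Real.exp 1 := by
    have h1 : -(1 / Real.exp 1) = (-1) / Real.exp 1 := by ring
    rw [h1]
    gcongr
    linarith
  obtain ⟨hw1, hw2⟩ := hW _ hWarg
  set w : ℝ := W₀ ((z - 1) / Real.exp 1) with hw_def
  have hwgt : -1 < w := by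
    rcases lt_or_eq_of_le hw2 with h | h
    · exact h
    · exfalso
      rw [← h] at hw1
      have h2 : (-1 : ℝ) * Real.exp (-1) * Real.exp 1 = z - 1 := by
        rw [hw1]; field_simp
      have h3 : Real.exp (-1) * Real.exp 1 = 1 := by
        rw [← Real.exp_add]; norm_num
      nlinarith
  set xs : ℝ := (w + 1) / a with hxs_def
  have hxs : 0 < xs := div_pos (by linarith) ha
  have haxs : a * xs = w + 1 := by
    rw [hxs_def]; field_simp
  have htst : tstar = T / xs := by
    rw [htstar, hft]
    have harg : D * hbar / lam / Real.exp 1 - 1 / Real.exp 1 = (z - 1) / Real.exp 1 := by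
      rw [hz_def]; ring
    rw [harg, ← hw_def]
    congr 1
    rw [hxs_def, ha_def]
    field_simp
  have htpos : 0 < tstar := by rw [htst]; positivity
  set E : ℝ := Real.exp (a * xs) with hE_def
  have hE : 0 < E := Real.exp_pos _
  have hEw : E = Real.exp w * Real.exp 1 := by
    rw [hE_def, haxs, Real.exp_add]
  have hstat : D - c = c * a * xs * E - c * E := by
    have h1 : w * Real.exp w * Real.exp 1 = z - 1 := by
      rw [hw1]; field_simp
    have h3 : c * a * xs * E - c * E = c * (z - 1) := by
      rw [hEw,
        show c * a * xs * (Real.exp w * Real.exp 1) = c * (a * xs) * (Real.exp w * Real.exp 1)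
          from by ring, haxs, ← h1]
      ring
    have h4 : D - c = c * (z - 1) := by rw [← hcz]; ring
    linarith
  have hGform : ∀ s : ℝ, 0 < s → G s = (D - c) * s + c * s * Real.exp (a * (T / s)) := by
    intro s hs
    rw [hG, hf, Real.rpow_def_of_pos (by norm_num : (0:ℝ) < 2)]
    have h5 : Real.log 2 * (T / s / B) = a * (T / s) := by rw [ha_def]; ring
    rw [h5]; ring
  have hTx : T / tstar = xs := by
    rw [htst]
    field_simp
  have hxt : xs * tstar = T := by
    rw [htst]
    field_simp
  have hGt : G tstar = c * a * T * E := by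
    rw [hGform tstar htpos, hTx, ← hE_def, hstat, ← hxt]
    ring
  rw [hGt, hGform t ht]
  have hkey : E * (a * (T / t) - a * xs + 1) ≤ Real.exp (a * (T / t)) := by
    have h := Real.add_one_le_exp (a * (T / t) - a * xs)
    have h2 := mul_le_mul_of_nonneg_left h hE.le
    have h6 : E * Real.exp (a * (T / t) - a * xs) = Real.exp (a * (T / t)) := by
      rw [hE_def, ← Real.exp_add]
      congr 1
      ring
    linarith [h2, h6.le, h6.ge]
  have h3 : c * t * (E * (a * (T / t) - a * xs + 1)) ≤ c * t * Real.exp (a * (T / t)) :=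
    mul_le_mul_of_nonneg_left hkey (by positivity)
  have htT : t * (T / t) = T := by field_simp
  have expand : (D - c) * t + c * t * (E * (a * (T / t) - a * xs + 1)) = c * a * T * E := by
    rw [hstat,
      show c * t * (E * (a * (T / t) - a * xs + 1))
        = c * E * a * (t * (T / t)) + (c * t * E - c * t * E * (a * xs)) from by ring, htT]
    ring
  linarith
end

section
/- Let K ≥ 1 and let t₁ᵒᶠᶠ, …, t_Kᵒᶠᶠ ≥ 0, t₁ᶜ, …, t_Kᶜ ≥ 0, t₁ᵈˡ, …, t_Kᵈˡ ≥ 0 be real numbers. Define I₁ = max(t₁ᵒᶠᶠ + t₁ᶜ, Σ_{k=1}^K t_kᵒᶠᶠ) and recursively I_k = max(Σ_{j=1}^k t_jᵒᶠᶠ + t_kᶜ, I_{k-1} + t_{k-1}ᵈˡ) for k = 2, …, K. Suppose that (i) Σ_{k=1}^K t_kᵒᶠᶠ ≤ t₁ᵒᶠᶠ + t₁ᶜ, and (ii) for every k ∈ {2, …, K}, t_kᶜ ≤ t₁ᵒᶠᶠ + t₁ᶜ + Σ_{j=1}^{k-1} t_jᵈˡ − Σ_{j=1}^k t_jᵒᶠᶠ.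 Then I_k = t₁ᵒᶠᶠ + t₁ᶜ + Σ_{j=1}^{k-1} t_jᵈˡ for every k ∈ {1, …, K}, and in particular the completion time T = I_K + t_Kᵈˡ equals t₁ᵒᶠᶠ + t₁ᶜ + Σ_{k=1}^K t_kᵈˡ. -/
open Finset

/-- Recursion elimination for the waiting times in the three-phase TDMA protocol.
If Σ_{k=1}^K t_kᵒᶠᶠ ≤ t₁ᵒᶠᶠ + t₁ᶜ and for every k ∈ {2,…,K},
t_kᶜ ≤ t₁ᵒᶠᶠ + t₁ᶜ + Σ_{j=1}^{k-1} t_jᵈˡ − Σ_{j=1}^k t_jᵒᶠᶠ, then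
I_k = t₁ᵒᶠᶠ + t₁ᶜ + Σ_{j=1}^{k-1} t_jᵈˡ for all k, and
I_K + t_Kᵈˡ = t₁ᵒᶠᶠ + t₁ᶜ + Σ_{k=1}^K t_kᵈˡ. -/
theorem waiting_time_recursion (K : ℕ) (hK : 1 ≤ K)
    (toff tc tdl : ℕ → ℝ)
    (htoff : ∀ k, 0 ≤ toff k) (htc : ∀ k, 0 ≤ tc k) (htdl : ∀ k, 0 ≤ tdl k)
    (I : ℕ → ℝ)
    (hI1 : I 1 = max (toff 1 + tc 1) (∑ k ∈ Icc 1 K, toff k))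
    (hIk : ∀ k, 2 ≤ k → k ≤ K →
      I k = max ((∑ j ∈ Icc 1 k, toff j) + tc k) (I (k - 1) + tdl (k - 1)))
    (hcond1 : ∑ k ∈ Icc 1 K, toff k ≤ toff 1 + tc 1)
    (hcond2 : ∀ k, 2 ≤ k → k ≤ K →
      tc k ≤ toff 1 + tc 1 + (∑ j ∈ Icc 1 (k - 1), tdl j) - ∑ j ∈ Icc 1 k, toff j) :
    (∀ k, 1 ≤ k → k ≤ K → I k = toff 1 + tc 1 + ∑ j ∈ Icc 1 (k - 1), tdl j) ∧
    I K + tdl K = toff 1 + tc 1 + ∑ k ∈ Icc 1 K, tdl k := by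
  have main : ∀ k, 1 ≤ k → k ≤ K → I k = toff 1 + tc 1 + ∑ j ∈ Icc 1 (k - 1), tdl j := by
    intro k hk
    induction k, hk using Nat.le_induction with
    | base =>
      intro _
      simp only [hI1, Nat.sub_self, Icc_self]
      rw [max_eq_left hcond1]
      simp
    | succ k hk ih =>
      intro hkK
      have hkK' : k ≤ K := by omega
      have hIe := hIk (k + 1) (by omega) hkK
      have hik := ih hkK'
      have hsum : ∑ j ∈ Icc 1 k, tdl j = (∑ j ∈ Icc 1 (k - 1), tdl j) + tdl k := by
        have hk1 : k = (k - 1) + 1 := by omega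
        rw [hk1, Finset.sum_Icc_succ_top (by omega : 1 ≤ (k-1)+1)]
        rw [← hk1]
      have hc2 := hcond2 (k + 1) (by omega) hkK
      simp only [Nat.add_sub_cancel] at hIe hc2 ⊢
      rw [hIe, hik, max_eq_right (by linarith), hsum]
      ring
  refine ⟨main, ?_⟩
  rw [main K hK le_rfl]
  have hK1 : K = (K - 1) + 1 := by omega
  rw [hK1, Finset.sum_Icc_succ_top (by omega : 1 ≤ (K-1)+1), ← hK1]
  ring
end

section
/- Under the hypotheses of the previous recursion lemma, if additionally the local computation time satisfies t₀ᶜ ≤ t₁ᵒᶠᶠ + t₁ᶜ + Σ_{k=1}^K t_kᵈˡ, then the total latency max(t₀ᶜ, I_K + t_Kᵈˡ) equals t₁ᵒᶠᶠ + t₁ᶜ + Σ_{k=1}^K t_kᵈˡ. -/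
open Finset

/-- Under the hypotheses of the waiting-time recursion lemma, if additionally the
local computation time satisfies t₀ᶜ ≤ t₁ᵒᶠᶠ + t₁ᶜ + Σ_{k=1}^K t_kᵈˡ, then the
total latency max(t₀ᶜ, I_K + t_Kᵈˡ) equals t₁ᵒᶠᶠ + t₁ᶜ + Σ_{k=1}^K t_kᵈˡ. -/
theorem total_latency_simplification (K : ℕ) (hK : 1 ≤ K)
    (toff tc tdl : ℕ → ℝ)
    (htoff : ∀ k, 0 ≤ toff k) (htc : ∀ k, 0 ≤ tc k) (htdl : ∀ k, 0 ≤ tdl k)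
    (I : ℕ → ℝ)
    (hI1 : I 1 = max (toff 1 + tc 1) (∑ k ∈ Icc 1 K, toff k))
    (hIk : ∀ k, 2 ≤ k → k ≤ K →
      I k = max ((∑ j ∈ Icc 1 k, toff j) + tc k) (I (k - 1) + tdl (k - 1)))
    (hcond1 : ∑ k ∈ Icc 1 K, toff k ≤ toff 1 + tc 1)
    (hcond2 : ∀ k, 2 ≤ k → k ≤ K →
      tc k ≤ toff 1 + tc 1 + (∑ j ∈ Icc 1 (k - 1), tdl j) - ∑ j ∈ Icc 1 k, toff j)
    (t0c : ℝ) (hlocal : t0c ≤ toff 1 + tc 1 + ∑ k ∈ Icc 1 K, tdl k) :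
    max t0c (I K + tdl K) = toff 1 + tc 1 + ∑ k ∈ Icc 1 K, tdl k := by
  have key : ∀ n, 1 ≤ n → n ≤ K →
      I n = toff 1 + tc 1 + ∑ j ∈ Icc 1 (n - 1), tdl j := by
    intro n
    induction n with
    | zero => intro h; omega
    | succ m ih =>
      intro h1 hle
      rcases Nat.eq_zero_or_pos m with hm | hm
      · subst hm
        simp only [Nat.add_sub_cancel]
        rw [show (1:ℕ) - 1 = 0 from rfl] at *
        rw [hI1, max_eq_left hcond1]
        simp
      · obtain ⟨b, rfl⟩ : ∃ b, m = b + 1 := ⟨m - 1, by omega⟩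
        have h2 : 2 ≤ b + 1 + 1 := by omega
        have ihm := ih (by omega) (by omega)
        rw [hIk (b + 1 + 1) h2 hle]
        have hsimp : b + 1 + 1 - 1 = b + 1 := rfl
        rw [hsimp, ihm]
        have hsum : ∑ j ∈ Icc 1 (b + 1), tdl j
            = (∑ j ∈ Icc 1 (b + 1 - 1), tdl j) + tdl (b + 1) := by
          rw [show b + 1 - 1 = b from rfl, Finset.sum_Icc_succ_top (by omega)]
        have hc2 := hcond2 (b + 1 + 1) h2 hle
        rw [hsimp] at hc2
        rw [max_eq_right (by linarith [hsum])]
        rw [Nat.add_sub_cancel] at hsum ⊢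
        linarith [hsum]
  have hIK := key K hK le_rfl
  have hsumK : toff 1 + tc 1 + ∑ k ∈ Icc 1 K, tdl k
      = (toff 1 + tc 1 + ∑ j ∈ Icc 1 (K - 1), tdl j) + tdl K := by
    obtain ⟨b, rfl⟩ : ∃ b, K = b + 1 := ⟨K - 1, by omega⟩
    rw [Finset.sum_Icc_succ_top (by omega), Nat.add_sub_cancel]
    ring
  rw [max_eq_right (by rw [hIK]; linarith [hsumK ▸ hlocal, hsumK]), hIK, hsumK]
end
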